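/- arXiv:1302.6863 — 3 statements merged into one kernel-verified Lean document; each statement's English description precedes it below -/
import Mathlib

section
/- Let f : ℕ → ℝ, let G be a finite simple graph with ∇_r(G) ≤ f(r) for every r ∈ ℕ, let S ⊆ V(G), let δ ∈ ℕ, and let C₁,…,C_s be pairwise vertex-disjoint connected subgraphs of G − S such that for each 1 ≤ i ≤ s the induced subgraph G[V(Cᵢ)] is connected with diameter at most δ and |N_S(Cᵢ)| > 2·f(δ+1). Then s ≤ 2·f(δ+1)·|S|. -/
/-- `H` is a shallow minor of `G` at depth `d`. -/
def IsShallowMinorAtDepth {V W : Type*} (G : SimpleGraph V) (d : ℕ)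
    (H : SimpleGraph W) : Prop :=
  ∃ ψ : W → Set V,
    (∀ w, (ψ w).Nonempty) ∧
    (∀ w₁ w₂, w₁ ≠ w₂ → Disjoint (ψ w₁) (ψ w₂)) ∧
    (∀ w, ∃ c : ψ w, ∀ u : ψ w,
      ∃ p : (SimpleGraph.induce (ψ w) G).Walk c u, p.length ≤ d) ∧
    (∀ w₁ w₂, w₁ ≠ w₂ →
      (H.Adj w₁ w₂ ↔ ∃ v₁ ∈ ψ w₁, ∃ v₂ ∈ ψ w₂, G.Adj v₁ v₂))

/-- The greatest reduced average density (grad) of rank `d`. -/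
noncomputable def grad {V : Type*} (G : SimpleGraph V) (d : ℕ) : ℝ :=
  sSup { q : ℝ | ∃ (n : ℕ) (H : SimpleGraph (Fin n)), 0 < n ∧
    IsShallowMinorAtDepth G d H ∧ q = (H.edgeSet.ncard : ℝ) / (n : ℝ) }

/-- `N_S(C)`: vertices of `S` having at least one neighbor in `C`. -/
def nbrIn {V : Type*} (G : SimpleGraph V) (S C : Set V) : Set V :=
  {v ∈ S | ∃ u ∈ C, G.Adj v u}

lemma grad_nonneg {V : Type*} (G : SimpleGraph V) (d : ℕ) : 0 ≤ grad G d := by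
  apply Real.sSup_nonneg
  rintro x ⟨n, H, hn, -, rfl⟩
  positivity

lemma gradSet_bddAbove {V : Type*} [Fintype V] (G : SimpleGraph V) (d : ℕ) :
    BddAbove { q : ℝ | ∃ (n : ℕ) (H : SimpleGraph (Fin n)), 0 < n ∧
      IsShallowMinorAtDepth G d H ∧ q = (H.edgeSet.ncard : ℝ) / (n : ℝ) } := by
  classical
  refine ⟨((Fintype.card V)^2 : ℕ), ?_⟩
  rintro x ⟨n, H, hn, ⟨ψ, hne, hdisj, -, -⟩, rfl⟩
  -- n ≤ card V
  have hnV : n ≤ Fintype.card V := by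
    have : Function.Injective (fun w : Fin n => (hne w).choose) := by
      intro a b hab
      by_contra hne'
      have hab' : (hne a).choose = (hne b).choose := hab
      have ha := (hne a).choose_spec
      rw [hab'] at ha
      exact Set.disjoint_left.mp (hdisj a b hne') ha (hne b).choose_spec
    simpa using Fintype.card_le_of_injective _ this
  -- edge bound
  have hE : H.edgeSet.ncard ≤ n * n := by
    have h1 : H.edgeSet.ncard ≤ (Set.univ : Set (Sym2 (Fin n))).ncard :=
      Set.ncard_le_ncard (Set.subset_univ _) Set.finite_univ
    have h2 : (Set.univ : Set (Sym2 (Fin n))).ncard = (n + 1).choose 2 := by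
      rw [Set.ncard_univ, Nat.card_eq_fintype_card, Sym2.card, Fintype.card_fin]
    have h3 : (n + 1).choose 2 ≤ n * n := by
      rw [Nat.choose_two_right]
      have : (n + 1) * (n + 1 - 1) ≤ 2 * (n * n) := by
        simp only [Nat.add_sub_cancel]; nlinarith
      exact Nat.div_le_of_le_mul this
    omega
  have h1n : (1 : ℝ) ≤ (n : ℝ) := by exact_mod_cast hn
  calc (H.edgeSet.ncard : ℝ) / (n : ℝ) ≤ (H.edgeSet.ncard : ℝ) :=
        div_le_self (by positivity) h1n
    _ ≤ (((Fintype.card V)^2 : ℕ) : ℝ) := by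
        have : H.edgeSet.ncard ≤ (Fintype.card V)^2 := by nlinarith
        exact_mod_cast this

/-- If `∇_r(G) ≤ f(r)` for all `r`, `S ⊆ V(G)`, and `C₁,…,C_s` are pairwise disjoint
connected subgraphs of `G − S`, each of diameter at most `δ` and with more than
`2·f(δ+1)` neighbors in `S`, then `s ≤ 2·f(δ+1)·|S|`. -/
theorem few_components_with_large_neighborhood
    {V : Type*} [Fintype V] (f : ℕ → ℝ) (G : SimpleGraph V)
    (hf : ∀ r : ℕ, grad G r ≤ f r)
    (S : Set V) (δ : ℕ) (s : ℕ) (C : Fin s → Set V)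
    (hsub : ∀ i, C i ⊆ Sᶜ)
    (hdisj : ∀ i j, i ≠ j → Disjoint (C i) (C j))
    (hconn : ∀ i, (SimpleGraph.induce (C i) G).Connected)
    (hdiam : ∀ i, ∀ u v : C i,
      ∃ p : (SimpleGraph.induce (C i) G).Walk u v, p.length ≤ δ)
    (hbig : ∀ i, 2 * f (δ + 1) < ((nbrIn G S (C i)).ncard : ℝ)) :
    (s : ℝ) ≤ 2 * f (δ + 1) * (S.ncard : ℝ) := by
  classical
  have hF0 : 0 ≤ f (δ + 1) := le_trans (grad_nonneg G (δ + 1)) (hf (δ + 1))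
  rcases Nat.eq_zero_or_pos s with hs | hs
  · subst hs
    simp only [Nat.cast_zero]
    positivity
  -- Set up the shallow minor
  haveI : Fintype ↥S := S.toFinite.fintype
  set k := Fintype.card ↥S with hk
  have hkcard : (S.ncard : ℝ) = (k : ℝ) := by
    rw [hk, ← Nat.card_coe_set_eq, Nat.card_eq_fintype_card]
  set n := s + k with hn
  have hn0 : 0 < n := by omega
  set e : (Fin s ⊕ ↥S) ≃ Fin n :=
    (Equiv.sumCongr (Equiv.refl (Fin s)) (Fintype.equivFin ↥S)).trans finSumFinEquiv with he
  set ψ : Fin n → Set V := fun x => Sum.elim C (fun v : ↥S => {v.1}) (e.symm x) with hψ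
  have hψl : ∀ i : Fin s, ψ (e (Sum.inl i)) = C i := by
    intro i; simp [hψ]
  have hψr : ∀ v : ↥S, ψ (e (Sum.inr v)) = {(v : V)} := by
    intro v; simp [hψ]
  set H : SimpleGraph (Fin n) :=
    SimpleGraph.fromRel (fun a b => ∃ v₁ ∈ ψ a, ∃ v₂ ∈ ψ b, G.Adj v₁ v₂) with hH
  have hminor : IsShallowMinorAtDepth G (δ + 1) H := by
    refine ⟨ψ, ?_, ?_, ?_, ?_⟩
    · intro w
      obtain ⟨y, rfl⟩ := e.surjective w
      rcases y with i | v
      · rw [hψl]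
        have := (hconn i).nonempty
        exact Set.nonempty_coe_sort.mp this
      · rw [hψr]; exact Set.singleton_nonempty _
    · intro w₁ w₂ hne
      obtain ⟨y₁, rfl⟩ := e.surjective w₁
      obtain ⟨y₂, rfl⟩ := e.surjective w₂
      have hy : y₁ ≠ y₂ := fun h => hne (by rw [h])
      rcases y₁ with i | v <;> rcases y₂ with j | w
      · rw [hψl, hψl]
        exact hdisj i j (fun h => hy (by rw [h]))
      · rw [hψl, hψr]
        rw [Set.disjoint_singleton_right]
        exact fun h => (hsub i h) w.2
      · rw [hψr, hψl]
        rw [Set.disjoint_singleton_left]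
        exact fun h => (hsub j h) v.2
      · rw [hψr, hψr]
        rw [Set.disjoint_singleton_right, Set.mem_singleton_iff]
        intro h
        exact hy (by rw [Subtype.ext h])
    · intro w
      obtain ⟨y, rfl⟩ := e.surjective w
      rcases y with i | v
      · have hCne : (C i).Nonempty := Set.nonempty_coe_sort.mp (hconn i).nonempty
        rw [hψl]
        refine ⟨⟨hCne.choose, hCne.choose_spec⟩, fun u => ?_⟩
        obtain ⟨p, hp⟩ := hdiam i ⟨hCne.choose, hCne.choose_spec⟩ u
        exact ⟨p, by omega⟩
      · rw [hψr]
        refine ⟨⟨(v : V), rfl⟩, fun u => ?_⟩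
        have : u = ⟨(v : V), rfl⟩ := Subtype.ext u.2
        subst this
        exact ⟨SimpleGraph.Walk.nil, by simp⟩
    · intro w₁ w₂ hne
      rw [hH, SimpleGraph.fromRel_adj]
      constructor
      · rintro ⟨-, (⟨v₁, h₁, v₂, h₂, hadj⟩ | ⟨v₁, h₁, v₂, h₂, hadj⟩)⟩
        · exact ⟨v₁, h₁, v₂, h₂, hadj⟩
        · exact ⟨v₂, h₂, v₁, h₁, hadj.symm⟩
      · intro h
        exact ⟨hne, Or.inl h⟩
  -- bound from the grad
  have hq : (H.edgeSet.ncard : ℝ) / (n : ℝ) ≤ f (δ + 1) := by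
    refine le_trans (le_trans (le_csSup (gradSet_bddAbove G (δ + 1))
      ⟨n, H, hn0, hminor, rfl⟩) (le_refl _)) (hf (δ + 1))
  -- lower bound on edges
  set m := ⌊2 * f (δ + 1)⌋₊ + 1 with hm
  have hm2f : 2 * f (δ + 1) < (m : ℝ) := by
    rw [hm]; push_cast; exact Nat.lt_floor_add_one _
  have hmle : ∀ i, m ≤ (nbrIn G S (C i)).ncard := by
    intro i
    have h1 : ((⌊2 * f (δ + 1)⌋₊ : ℕ) : ℝ) < ((nbrIn G S (C i)).ncard : ℝ) :=
      lt_of_le_of_lt (Nat.floor_le (by positivity)) (hbig i)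
    have := Nat.cast_lt.mp h1
    omega
  -- injections into neighborhoods
  have hg : ∀ i, Nonempty (Fin m ↪ ↥(nbrIn G S (C i))) := by
    intro i
    apply Function.Embedding.nonempty_of_card_le
    rw [Fintype.card_fin]
    have : Fintype.card ↥(nbrIn G S (C i)) = (nbrIn G S (C i)).ncard := by
      rw [← Nat.card_coe_set_eq, Nat.card_eq_fintype_card]
    rw [this]; exact hmle i
  have g : ∀ i, Fin m ↪ ↥(nbrIn G S (C i)) := fun i => (hg i).some
  -- the injection into the edge set
  have hinj : ∃ Φ : Fin s × Fin m → ↥H.edgeSet, Function.Injective Φ := by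
    have hmem : ∀ (i : Fin s) (j : Fin m),
        s(e (Sum.inl i), e (Sum.inr ⟨(g i j : V), (g i j).2.1⟩)) ∈ H.edgeSet := by
      intro i j
      rw [SimpleGraph.mem_edgeSet, hH, SimpleGraph.fromRel_adj]
      obtain ⟨hvS, u, huC, hadj⟩ := (g i j).2
      refine ⟨e.injective.ne (by simp), Or.inl ?_⟩
      refine ⟨u, ?_, (g i j : V), ?_, hadj.symm⟩
      · rw [hψl]; exact huC
      · rw [hψr]; rfl
    refine ⟨fun p => ⟨_, hmem p.1 p.2⟩, ?_⟩
    rintro ⟨i, j⟩ ⟨i', j'⟩ hpq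
    simp only [Subtype.mk_eq_mk, Sym2.eq_iff] at hpq
    rcases hpq with ⟨h1, h2⟩ | ⟨h1, h2⟩
    · have hi : Sum.inl i = Sum.inl i' := e.injective h1
      have hv := e.injective h2
      simp only [Sum.inl.injEq] at hi
      simp only [Sum.inr.injEq] at hv
      subst hi
      have : g i j = g i j' := Subtype.ext (Subtype.mk_eq_mk.mp hv)
      have := (g i).injective this
      simp [this]
    · exact absurd (e.injective h1) (by simp)
  obtain ⟨Φ, hΦ⟩ := hinj
  have hsm : s * m ≤ H.edgeSet.ncard := by
    have := Nat.card_le_card_of_injective Φ hΦ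
    rwa [Nat.card_prod, Nat.card_eq_fintype_card, Nat.card_eq_fintype_card,
      Fintype.card_fin, Fintype.card_fin, Nat.card_coe_set_eq] at this
  -- arithmetic
  have hE2 : (H.edgeSet.ncard : ℝ) ≤ f (δ + 1) * (n : ℝ) := by
    rw [div_le_iff₀ (by exact_mod_cast hn0)] at hq
    exact hq
  have hE1 : (s : ℝ) * (m : ℝ) ≤ (H.edgeSet.ncard : ℝ) := by exact_mod_cast hsm
  have hncast : (n : ℝ) = (s : ℝ) + (k : ℝ) := by rw [hn]; push_cast; ring
  have hs1 : (1 : ℝ) ≤ (s : ℝ) := by exact_mod_cast hs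
  have hm1 : (1 : ℝ) ≤ (m : ℝ) := by
    have : 1 ≤ m := by omega
    exact_mod_cast this
  have hk0 : (0 : ℝ) ≤ (k : ℝ) := Nat.cast_nonneg _
  rw [hkcard]
  set F := f (δ + 1) with hFdef
  have key : (s : ℝ) * m ≤ F * ((s : ℝ) + (k : ℝ)) := by
    calc (s : ℝ) * m ≤ (H.edgeSet.ncard : ℝ) := hE1
      _ ≤ F * (n : ℝ) := hE2
      _ = F * ((s : ℝ) + (k : ℝ)) := by rw [hncast]
  rcases le_or_gt F (1/2) with hFhalf | hFhalf
  · -- s ≤ s*m ≤ F*s + F*k ≤ s/2 + F*k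
    have h1 : (s : ℝ) ≤ (s : ℝ) * m := le_mul_of_one_le_right (by positivity) hm1
    have h2 : F * (s : ℝ) ≤ (1/2) * (s : ℝ) :=
      mul_le_mul_of_nonneg_right hFhalf (by positivity)
    nlinarith
  · -- 2F*s ≤ m*s ≤ F*s + F*k ⟹ s ≤ k ⟹ s ≤ 2F*k
    have h1 : 2 * F * (s : ℝ) ≤ (m : ℝ) * (s : ℝ) :=
      mul_le_mul_of_nonneg_right (le_of_lt hm2f) (by positivity)
    have h2 : F * (s : ℝ) ≤ F * (k : ℝ) := by nlinarith
    have h3 : (s : ℝ) ≤ (k : ℝ) := le_of_mul_le_mul_left h2 (by linarith)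
    nlinarith
end

section
/- Let G be a finite simple bipartite graph whose vertex set is partitioned into parts X and Y (every edge of G has one endpoint in X and one endpoint in Y), and let 𝓗 = (G∇1)_{≤|X|} be the set of shallow minors of G at depth 1 having at most |X| vertices. Then the number of vertices u ∈ Y whose degree in G is strictly greater than ω(𝓗) is at most 2∇₀(𝓗)·|X|. -/
/-- `ω((G∇d)_{≤ℓ})`: the supremum of clique sizes over shallow minors of `G` at
depth `d` having at most `ℓ` vertices. -/
noncomputable def omegaMinors {V : Type*} (G : SimpleGraph V) (d ℓ : ℕ) : ℕ :=
  sSup { m : ℕ | ∃ (n : ℕ) (H : SimpleGraph (Fin n)), n ≤ ℓ ∧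
    IsShallowMinorAtDepth G d H ∧ ∃ s : Finset (Fin n), H.IsNClique m s }

/-- `∇₀((G∇d)_{≤ℓ})`: the supremum of `|E(H)|/|V(H)|` over nonempty shallow minors of
`G` at depth `d` having at most `ℓ` vertices. -/
noncomputable def nabla0Minors {V : Type*} (G : SimpleGraph V) (d ℓ : ℕ) : ℝ :=
  sSup { q : ℝ | ∃ (n : ℕ) (H : SimpleGraph (Fin n)), 0 < n ∧ n ≤ ℓ ∧
    IsShallowMinorAtDepth G d H ∧ q = (H.edgeSet.ncard : ℝ) / (n : ℝ) }

/-!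
Process the high-degree vertices `u ∈ Y` one by one, contracting each of them into one of its
neighbours in `X`. The contractions made so far yield a depth-1 shallow minor `F` of `G` on the
vertex set `X`. The neighbourhood of the next vertex `u` is not a clique of `F`, since it has more
than `ω(𝓗)` vertices; so `u` has two neighbours `x ≠ y` not adjacent in `F`, and contracting `u`
into `x` creates the new edge `xy`. Hence `F` ends up with at least as many edges as there are
high-degree vertices, while `|E(F)| ≤ ∇₀(𝓗)·|X|`.
-/

open SimpleGraph Finset

section

variable {V W W' : Type*} {G : SimpleGraph V} {d ℓ : ℕ}

theorem IsShallowMinorAtDepth.of_iso {H : SimpleGraph W} {H' : SimpleGraph W'} (e : H ≃g H')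
    (hH : IsShallowMinorAtDepth G d H) : IsShallowMinorAtDepth G d H' := by
  obtain ⟨ψ, hne, hdisj, hrad, hadj⟩ := hH
  exact ⟨ψ ∘ e.symm, fun _ => hne _, fun _ _ h => hdisj _ _ (e.symm.injective.ne h),
    fun _ => hrad _, fun _ _ h => e.symm.map_adj_iff.symm.trans (hadj _ _ (e.symm.injective.ne h))⟩

theorem le_omegaMinors [Finite W] {H : SimpleGraph W} (hH : IsShallowMinorAtDepth G d H)
    (hW : Nat.card W ≤ ℓ) {s : Set W} (hs : H.IsClique s) : s.ncard ≤ omegaMinors G d ℓ := by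
  classical
  let e := Finite.equivFin W
  have hbdd : BddAbove {m | ∃ (n : ℕ) (H : SimpleGraph (Fin n)), n ≤ ℓ ∧
      IsShallowMinorAtDepth G d H ∧ ∃ s : Finset (Fin n), H.IsNClique m s} := by
    refine ⟨ℓ, ?_⟩
    rintro m ⟨n, H', hn, -, t, ht⟩
    exact ht.card_eq ▸ (t.card_le_univ.trans_eq (Fintype.card_fin n)).trans hn
  have hsn : H.IsNClique s.ncard s.toFinite.toFinset :=
    ⟨by simpa using hs, (Set.ncard_eq_toFinset_card s).symm⟩
  exact le_csSup hbdd ⟨_, H.map e.toEmbedding, hW, hH.of_iso (Iso.map e H), _, hsn.map⟩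

theorem ncard_edgeSet_le_sq [Finite W] (H : SimpleGraph W) :
    H.edgeSet.ncard ≤ Nat.card W ^ 2 := by
  classical
  have := Fintype.ofFinite W
  calc H.edgeSet.ncard = #H.edgeFinset := by rw [← coe_edgeFinset, Set.ncard_coe_finset]
  _ ≤ (Fintype.card W).choose 2 := card_edgeFinset_le_card_choose_two
  _ ≤ Nat.card W ^ 2 := Nat.card_eq_fintype_card (α := W) ▸ Nat.choose_le_pow _ _

theorem ncard_edgeSet_le_nabla0Minors_mul [Finite W] {H : SimpleGraph W}
    (hH : IsShallowMinorAtDepth G d H) (hW : Nat.card W ≤ ℓ) :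
    (H.edgeSet.ncard : ℝ) ≤ nabla0Minors G d ℓ * Nat.card W := by
  obtain hW0 | hW0 := (Nat.card W).eq_zero_or_pos
  · have := ncard_edgeSet_le_sq H
    simp_all
  let e := Finite.equivFin W
  have hbdd : BddAbove {q : ℝ | ∃ (n : ℕ) (H : SimpleGraph (Fin n)), 0 < n ∧ n ≤ ℓ ∧
      IsShallowMinorAtDepth G d H ∧ q = (H.edgeSet.ncard : ℝ) / (n : ℝ)} := by
    refine ⟨ℓ, ?_⟩
    rintro q ⟨n, H', hn0, hn, -, rfl⟩
    rw [div_le_iff₀ (by exact_mod_cast hn0)]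
    have := ncard_edgeSet_le_sq H'
    rw [Nat.card_fin] at this
    exact_mod_cast this.trans (by nlinarith)
  have hE : (H.map e).edgeSet.ncard = H.edgeSet.ncard := by
    simp only [← Nat.card_coe_set_eq]
    exact Nat.card_congr (Iso.map e H).mapEdgeSet.symm
  rw [← div_le_iff₀ (by exact_mod_cast hW0)]
  exact le_csSup hbdd ⟨_, _, hW0, hW, hH.of_iso (Iso.map e H), by rw [hE]⟩

theorem nabla0Minors_nonneg : 0 ≤ nabla0Minors G d ℓ :=
  Real.sSup_nonneg fun _ ⟨_, _, _, _, _, hq⟩ => hq ▸ by positivity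

variable {X Y : Set V}

/-- Contract every edge `u — a u` with `u ∈ D` and keep the vertices of `X`; edges of `G` inside
`X` are ignored, as a bipartite `G` has none. -/
def contractionGraph (G : SimpleGraph V) (X : Set V) (D : Finset V) (a : V → V) :
    SimpleGraph X :=
  SimpleGraph.fromRel fun x y => ∃ u ∈ D, a u = x ∧ G.Adj u y

theorem isShallowMinorAtDepth_contractionGraph (h : G.IsBipartiteWith X Y) {D : Finset V}
    (hDY : ∀ u ∈ D, u ∈ Y) {a : V → V} (ha : ∀ u ∈ D, G.Adj u (a u)) :
    IsShallowMinorAtDepth G 1 (contractionGraph G X D a) := by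
  have hXY : ∀ v ∈ X, v ∉ Y := fun _ hv => Set.disjoint_left.mp h.disjoint hv
  refine ⟨fun x => insert (x : V) {u | u ∈ D ∧ a u = x}, fun x => ⟨x, Set.mem_insert _ _⟩,
    ?_, ?_, ?_⟩
  · intro x y hxy
    rw [Set.disjoint_left]
    rintro v (rfl | ⟨hvD, hvx⟩) (hvy | ⟨hvD', hvy⟩)
    · exact hxy (Subtype.val_injective hvy)
    · exact hXY _ x.2 (hDY _ hvD')
    · exact hXY _ (hvy ▸ y.2) (hDY _ hvD)
    · exact hxy (Subtype.val_injective (hvx.symm.trans hvy))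
  · intro x
    refine ⟨⟨x, Set.mem_insert _ _⟩, ?_⟩
    rintro ⟨v, rfl | ⟨hvD, hvx⟩⟩
    · exact ⟨Walk.nil, zero_le_one⟩
    · exact ⟨Walk.cons (G := G.induce _) (hvx ▸ ha v hvD).symm Walk.nil, le_rfl⟩
  · intro x y hxy
    simp only [contractionGraph, fromRel_adj, ne_eq, hxy, not_false_eq_true, true_and]
    constructor
    · rintro (⟨u, huD, hux, hadj⟩ | ⟨u, huD, huy, hadj⟩)
      · exact ⟨u, Or.inr ⟨huD, hux⟩, y, Set.mem_insert _ _, hadj⟩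
      · exact ⟨x, Set.mem_insert _ _, u, Or.inr ⟨huD, huy⟩, hadj.symm⟩
    · rintro ⟨v₁, rfl | ⟨h1D, h1x⟩, v₂, rfl | ⟨h2D, h2y⟩, hadj⟩
      · exact (hXY _ y.2 (h.mem_of_mem_adj x.2 hadj)).elim
      · exact Or.inr ⟨v₂, h2D, h2y, hadj.symm⟩
      · exact Or.inl ⟨v₁, h1D, h1x, hadj⟩
      · exact (hXY _ (h.mem_of_mem_adj' (hDY _ h2D) hadj) (hDY _ h1D)).elim

theorem exists_not_adj_of_omegaMinors_lt [Finite V] {H : SimpleGraph X}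
    (hH : IsShallowMinorAtDepth G d H) {u : V} (hu : G.neighborSet u ⊆ X)
    (hdeg : omegaMinors G d X.ncard < (G.neighborSet u).ncard) :
    ∃ x y : X, x ≠ y ∧ G.Adj u x ∧ G.Adj u y ∧ ¬H.Adj x y := by
  by_contra! hcon
  have hclique : H.IsClique (Subtype.val ⁻¹' G.neighborSet u) :=
    fun x hx y hy hxy => hcon x y hxy hx hy
  have hle := le_omegaMinors hH (Nat.card_coe_set_eq X).le hclique
  rw [Set.ncard_preimage_of_injective_subset_range Subtype.val_injective
    (by rwa [Subtype.range_coe])] at hle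
  omega

theorem contractionGraph_lt_insert [DecidableEq V] {D : Finset V} {a : V → V} {u : V}
    (hu : u ∉ D) {x y : X} (hxy : x ≠ y) (huy : G.Adj u y)
    (hnadj : ¬(contractionGraph G X D a).Adj x y) :
    contractionGraph G X D a < contractionGraph G X (insert u D) (Function.update a u x) := by
  refine lt_of_le_not_ge (fun p q ⟨hpq, hpq'⟩ => ⟨hpq, hpq'.imp ?_ ?_⟩) fun hle => hnadj <|
    hle ⟨hxy, Or.inl ⟨u, mem_insert_self u D, Function.update_self .., huy⟩⟩ <;>
  · rintro ⟨w, hwD, haw, hadj⟩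
    refine ⟨w, mem_insert_of_mem hwD, ?_, hadj⟩
    rwa [Function.update_of_ne (ne_of_mem_of_not_mem hwD hu)]

theorem exists_card_le_ncard_edgeSet_contractionGraph [Finite V] (h : G.IsBipartiteWith X Y)
    (D : Finset V) (hD : ∀ u ∈ D, u ∈ Y ∧ omegaMinors G 1 X.ncard < (G.neighborSet u).ncard) :
    ∃ a : V → V, (∀ u ∈ D, G.Adj u (a u)) ∧
      #D ≤ (contractionGraph G X D a).edgeSet.ncard := by
  classical
  induction D using Finset.induction_on with
  | empty => exact ⟨id, by simp, by simp⟩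
  | @insert u D hu ih =>
    obtain ⟨a, ha, hcard⟩ := ih fun v hv => hD v (mem_insert_of_mem hv)
    obtain ⟨huY, hdeg⟩ := hD u (mem_insert_self u D)
    have hF := isShallowMinorAtDepth_contractionGraph h
      (fun v hv => (hD v (mem_insert_of_mem hv)).1) ha
    obtain ⟨x, y, hxy, hux, huy, hnadj⟩ :=
      exists_not_adj_of_omegaMinors_lt hF (isBipartiteWith_neighborSet_subset' h huY) hdeg
    refine ⟨Function.update a u x, fun v hv => ?_, ?_⟩
    · rcases eq_or_ne v u with rfl | hvu
      · simpa using hux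
      · rw [Function.update_of_ne hvu]
        exact ha v ((mem_insert.mp hv).resolve_left hvu)
    · have := Set.ncard_lt_ncard
        (edgeSet_ssubset_edgeSet.mpr (contractionGraph_lt_insert hu hxy huy hnadj))
      rw [card_insert_of_notMem hu]
      omega

end

theorem bipartite_few_high_degree_vertices_general_general
    {V : Type*} [Fintype V] (G : SimpleGraph V) (X Y : Set V)
    (hdisj : Disjoint X Y)
    (hbip : ∀ u v, G.Adj u v → (u ∈ X ∧ v ∈ Y) ∨ (u ∈ Y ∧ v ∈ X)) :
    (({u ∈ Y | omegaMinors G 1 X.ncard < (G.neighborSet u).ncard}.ncard : ℝ)) ≤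
      2 * nabla0Minors G 1 X.ncard * (X.ncard : ℝ) := by
  classical
  have h : G.IsBipartiteWith X Y := ⟨hdisj, hbip⟩
  set D : Set V := {u ∈ Y | omegaMinors G 1 X.ncard < (G.neighborSet u).ncard}
  have hD : ∀ u ∈ D.toFinset, u ∈ Y ∧ omegaMinors G 1 X.ncard < (G.neighborSet u).ncard :=
    fun _ hu => (Set.mem_toFinset (s := D)).mp hu
  obtain ⟨a, ha, hcard⟩ := exists_card_le_ncard_edgeSet_contractionGraph h D.toFinset hD
  have hF := isShallowMinorAtDepth_contractionGraph h (fun u hu => (hD u hu).1) ha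
  have hedges := ncard_edgeSet_le_nabla0Minors_mul hF (Nat.card_coe_set_eq X).le
  rw [Nat.card_coe_set_eq] at hedges
  have hnonneg : 0 ≤ nabla0Minors G 1 X.ncard * X.ncard :=
    mul_nonneg nabla0Minors_nonneg (Nat.cast_nonneg _)
  calc (D.ncard : ℝ) = #D.toFinset := by rw [Set.ncard_eq_toFinset_card']
  _ ≤ (contractionGraph G X D.toFinset a).edgeSet.ncard := by exact_mod_cast hcard
  _ ≤ nabla0Minors G 1 X.ncard * X.ncard := hedges
  _ ≤ 2 * nabla0Minors G 1 X.ncard * X.ncard := by linarith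

/-- In a finite bipartite graph with parts `X` and `Y`, with `𝓗 = (G∇1)_{≤|X|}`,
the number of vertices of `Y` of degree greater than `ω(𝓗)` is at most `2∇₀(𝓗)·|X|`. -/
theorem bipartite_few_high_degree_vertices_general
    {V : Type*} [Fintype V] (G : SimpleGraph V) (X Y : Set V)
    (hunion : X ∪ Y = Set.univ) (hdisj : Disjoint X Y)
    (hbip : ∀ u v, G.Adj u v → (u ∈ X ∧ v ∈ Y) ∨ (u ∈ Y ∧ v ∈ X)) :
    (({u ∈ Y | omegaMinors G 1 X.ncard < (G.neighborSet u).ncard}.ncard : ℝ)) ≤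
      2 * nabla0Minors G 1 X.ncard * (X.ncard : ℝ) :=
  bipartite_few_high_degree_vertices_general_general G X Y hdisj hbip
end

section
/- For every function f : ℕ × ℕ → ℝ and every constant c ∈ ℕ there exists a real constant M (depending only on f and c) with the following property: for every finite simple graph G with local expansion bounded by f, and for every integer ℓ with 0 ≤ ℓ ≤ |V(G)|, every shallow minor H of G at depth c with at most ℓ vertices satisfies #ω(H) ≤ M·ℓ·|V(H)|; equivalently, clique-grad₀((G∇c)_{≤ℓ}) ≤ M·ℓ. -/
/-- The closed ball of radius `a` around `v`: vertices reachable from `v`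
by a walk of length at most `a`. -/
def closedBall {V : Type*} (G : SimpleGraph V) (v : V) (a : ℕ) : Set V :=
  {u | ∃ p : G.Walk v u, p.length ≤ a}

/-- `G` has local expansion bounded by `f`. -/
def LocalExpansionBoundedBy {V : Type*} (G : SimpleGraph V) (f : ℕ × ℕ → ℝ) : Prop :=
  ∀ (a r : ℕ) (v : V), grad (SimpleGraph.induce (closedBall G v a) G) r ≤ f (a, r)

/-- `#ω(H)`: the number of nonempty cliques of `H`. -/
noncomputable def numCliques {W : Type*} (H : SimpleGraph W) : ℕ :=
  {s : Finset W | s.Nonempty ∧ H.IsClique (s : Set W)}.ncard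

/-- `clique-grad₀((G∇d)_{≤ℓ})`: the supremum of `#ω(H)/|V(H)|` over nonempty shallow
minors of `G` at depth `d` having at most `ℓ` vertices. -/
noncomputable def cliqueGrad0Minors {V : Type*} (G : SimpleGraph V) (d ℓ : ℕ) : ℝ :=
  sSup { q : ℝ | ∃ (n : ℕ) (H : SimpleGraph (Fin n)), 0 < n ∧ n ≤ ℓ ∧
    IsShallowMinorAtDepth G d H ∧ q = (numCliques H : ℝ) / (n : ℝ) }

/-!
Let `H` be a depth-`c` shallow minor of `G` and `w` a vertex of `H`. The branch sets of the
closed neighbourhood of `w` all lie in the ball of radius `3c + 1` around the centre of the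
branch set of `w`, so every subgraph of `H` induced on that neighbourhood is a depth-`c` shallow
minor of the ball; it has at most `f (3c + 1, c)` edges per vertex, hence a vertex of degree at
most `D = ⌊2 f (3c + 1, c)⌋`. So closed neighbourhoods are `D`-degenerate, and a `D`-degenerate
set of `k` vertices spans at most `k · 2^D` nonempty cliques. As every nonempty clique lies in the
closed neighbourhood of each of its vertices, `#ω(H) ≤ n · n · 2^D ≤ 2^D · ℓ · n`.
-/

open Finset

section ClosedBall

variable {V : Type*} {G : SimpleGraph V} {u v : V} {a b : ℕ}

theorem mem_closedBall_of_adj (h : G.Adj u v) : v ∈ closedBall G u 1 :=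
  ⟨h.toWalk, le_rfl⟩

theorem mem_closedBall_comm : u ∈ closedBall G v a ↔ v ∈ closedBall G u a :=
  ⟨fun ⟨p, hp⟩ => ⟨p.reverse, by simpa using hp⟩, fun ⟨p, hp⟩ => ⟨p.reverse, by simpa using hp⟩⟩

theorem closedBall_subset_closedBall_add (h : u ∈ closedBall G v a) :
    closedBall G u b ⊆ closedBall G v (a + b) := by
  obtain ⟨p, hp⟩ := h
  rintro x ⟨q, hq⟩
  exact ⟨p.append q, by rw [SimpleGraph.Walk.length_append]; omega⟩

theorem closedBall_mono (h : a ≤ b) : closedBall G v a ⊆ closedBall G v b :=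
  fun _ ⟨p, hp⟩ => ⟨p, hp.trans h⟩

end ClosedBall

/-- `ψ` assigns to each vertex of `H` its branch set in `G`. -/
structure IsShallowMinorModel {V W : Type*} (G : SimpleGraph V) (d : ℕ) (H : SimpleGraph W)
    (ψ : W → Set V) : Prop where
  nonempty : ∀ w, (ψ w).Nonempty
  disjoint : ∀ w₁ w₂, w₁ ≠ w₂ → Disjoint (ψ w₁) (ψ w₂)
  radius_le : ∀ w, ∃ c : ψ w, ∀ u : ψ w,
    ∃ p : (SimpleGraph.induce (ψ w) G).Walk c u, p.length ≤ d
  adj_iff : ∀ w₁ w₂, w₁ ≠ w₂ → (H.Adj w₁ w₂ ↔ ∃ v₁ ∈ ψ w₁, ∃ v₂ ∈ ψ w₂, G.Adj v₁ v₂)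

theorem isShallowMinorAtDepth_iff_exists_model {V W : Type*} {G : SimpleGraph V} {d : ℕ}
    {H : SimpleGraph W} : IsShallowMinorAtDepth G d H ↔ ∃ ψ, IsShallowMinorModel G d H ψ :=
  ⟨fun ⟨ψ, h₁, h₂, h₃, h₄⟩ => ⟨ψ, h₁, h₂, h₃, h₄⟩, fun ⟨ψ, h₁, h₂, h₃, h₄⟩ => ⟨ψ, h₁, h₂, h₃, h₄⟩⟩

namespace IsShallowMinorModel

variable {V W W' : Type*} {G : SimpleGraph V} {d : ℕ} {H : SimpleGraph W} {ψ : W → Set V}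

theorem exists_subset_closedBall (hψ : IsShallowMinorModel G d H ψ) (w : W) :
    ∃ v ∈ ψ w, ψ w ⊆ closedBall G v d := by
  obtain ⟨c, hc⟩ := hψ.radius_le w
  refine ⟨c, c.2, fun x hx => ?_⟩
  obtain ⟨p, hp⟩ := hc ⟨x, hx⟩
  exact ⟨p.map (SimpleGraph.Embedding.induce (ψ w)).toHom, (p.length_map _).trans_le hp⟩

/-- Branch sets of adjacent vertices are joined by an edge, so the branch sets of the closed
neighbourhood of `w` lie within `d + 1 + d + d` of the centre of `ψ w`. -/
theorem exists_closedNbhd_subset_closedBall (hψ : IsShallowMinorModel G d H ψ) (w : W) :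
    ∃ v, ∀ u, (u = w ∨ H.Adj w u) → ψ u ⊆ closedBall G v (3 * d + 1) := by
  obtain ⟨v, -, hv⟩ := hψ.exists_subset_closedBall w
  refine ⟨v, fun u hu => ?_⟩
  rcases hu with rfl | hwu
  · exact hv.trans (closedBall_mono (by omega))
  obtain ⟨x, hx, y, hy, hxy⟩ := (hψ.adj_iff w u hwu.ne).1 hwu
  obtain ⟨c, -, hc⟩ := hψ.exists_subset_closedBall u
  have hy' : y ∈ closedBall G v (d + 1) :=
    closedBall_subset_closedBall_add (hv hx) (mem_closedBall_of_adj hxy)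
  have hc' : c ∈ closedBall G v (d + 1 + d) :=
    closedBall_subset_closedBall_add hy' (mem_closedBall_comm.1 (hc hy))
  exact hc.trans ((closedBall_subset_closedBall_add hc').trans (closedBall_mono (by omega)))

theorem induce (hψ : IsShallowMinorModel G d H ψ) (S : Set W) :
    IsShallowMinorModel G d (H.induce S) (fun u => ψ u) where
  nonempty u := hψ.nonempty u
  disjoint u₁ u₂ h := hψ.disjoint u₁ u₂ (Subtype.val_injective.ne h)
  radius_le u := hψ.radius_le u
  adj_iff u₁ u₂ h := hψ.adj_iff u₁ u₂ (Subtype.val_injective.ne h)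

theorem restrict (hψ : IsShallowMinorModel G d H ψ) {B : Set V} (hB : ∀ w, ψ w ⊆ B) :
    IsShallowMinorModel (G.induce B) d H (fun w => Subtype.val ⁻¹' ψ w) where
  nonempty w := by
    obtain ⟨x, hx⟩ := hψ.nonempty w
    exact ⟨⟨x, hB w hx⟩, hx⟩
  disjoint w₁ w₂ h := (hψ.disjoint w₁ w₂ h).preimage _
  radius_le w := by
    let φ : G.induce (ψ w) →g (G.induce B).induce (Subtype.val ⁻¹' ψ w) :=
      ⟨fun x => ⟨⟨x, hB w x.2⟩, x.2⟩, id⟩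
    obtain ⟨c, hc⟩ := hψ.radius_le w
    refine ⟨φ c, fun u => ?_⟩
    obtain ⟨p, hp⟩ := hc ⟨u.1.1, u.2⟩
    exact ⟨p.map φ, (SimpleGraph.Walk.length_map φ p).trans_le hp⟩
  adj_iff w₁ w₂ h := by
    rw [hψ.adj_iff w₁ w₂ h]
    constructor
    · rintro ⟨x, hx, y, hy, hxy⟩
      exact ⟨⟨x, hB w₁ hx⟩, hx, ⟨y, hB w₂ hy⟩, hy, hxy⟩
    · rintro ⟨x, hx, y, hy, hxy⟩
      exact ⟨x, hx, y, hy, hxy⟩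

theorem comap {H' : SimpleGraph W'} (hψ : IsShallowMinorModel G d H ψ) (e : H' ≃g H) :
    IsShallowMinorModel G d H' (ψ ∘ e) where
  nonempty w := hψ.nonempty (e w)
  disjoint _ _ h := hψ.disjoint _ _ (e.injective.ne h)
  radius_le w := hψ.radius_le (e w)
  adj_iff _ _ h := e.map_adj_iff.symm.trans (hψ.adj_iff _ _ (e.injective.ne h))

theorem card_le [Finite V] (hψ : IsShallowMinorModel G d H ψ) :
    Nat.card W ≤ Nat.card V := by
  choose x hx using hψ.nonempty
  refine Nat.card_le_card_of_injective x fun w₁ w₂ h => ?_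
  by_contra hne
  exact (hψ.disjoint w₁ w₂ hne).ne_of_mem (hx w₁) (hx w₂) h

end IsShallowMinorModel

section Grad

variable {V W : Type*} {G : SimpleGraph V} {d : ℕ}

theorem bddAbove_grad [Finite V] (G : SimpleGraph V) (d : ℕ) :
    BddAbove { q : ℝ | ∃ (n : ℕ) (H : SimpleGraph (Fin n)), 0 < n ∧
      IsShallowMinorAtDepth G d H ∧ q = (H.edgeSet.ncard : ℝ) / (n : ℝ) } := by
  refine ⟨((Nat.card V).choose 2 : ℝ), ?_⟩
  rintro q ⟨n, H, hn, hH, rfl⟩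
  obtain ⟨ψ, hψ⟩ := isShallowMinorAtDepth_iff_exists_model.1 hH
  have hnV : n ≤ Nat.card V := by simpa using hψ.card_le
  have hE : H.edgeSet.ncard ≤ (Nat.card V).choose 2 := by
    classical
    rw [← H.coe_edgeFinset, Set.ncard_coe_finset]
    exact H.card_edgeFinset_le_card_choose_two.trans
      (Nat.choose_le_choose 2 (by simpa using hnV))
  calc (H.edgeSet.ncard : ℝ) / n ≤ H.edgeSet.ncard :=
        div_le_self (Nat.cast_nonneg _) (by exact_mod_cast hn)
    _ ≤ (Nat.card V).choose 2 := by exact_mod_cast hE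

theorem ncard_edgeSet_le_grad_mul [Finite V] {n : ℕ} {H : SimpleGraph (Fin n)}
    (hH : IsShallowMinorAtDepth G d H) : (H.edgeSet.ncard : ℝ) ≤ grad G d * n := by
  rcases Nat.eq_zero_or_pos n with rfl | hn
  · simp [Set.eq_empty_of_isEmpty]
  rw [← div_le_iff₀ (by exact_mod_cast hn)]
  exact le_csSup (bddAbove_grad G d) ⟨n, H, hn, hH, rfl⟩

theorem ncard_edgeSet_le_grad_mul_card [Finite V] [Fintype W] {H : SimpleGraph W}
    (hH : IsShallowMinorAtDepth G d H) :
    (H.edgeSet.ncard : ℝ) ≤ grad G d * Fintype.card W := by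
  let e := SimpleGraph.Iso.comap (Fintype.equivFin W).symm H
  obtain ⟨ψ, hψ⟩ := isShallowMinorAtDepth_iff_exists_model.1 hH
  have hH' := ncard_edgeSet_le_grad_mul
    (isShallowMinorAtDepth_iff_exists_model.2 ⟨_, hψ.comap e⟩)
  rwa [← Nat.card_coe_set_eq, Nat.card_congr e.mapEdgeSet, Nat.card_coe_set_eq] at hH'

end Grad

namespace SimpleGraph

variable {W : Type*} (H : SimpleGraph W)

theorem exists_degree_le_of_ncard_edgeSet_le [Fintype W] [Nonempty W] [DecidableRel H.Adj]
    {B : ℝ} (h : (H.edgeSet.ncard : ℝ) ≤ B * Fintype.card W) : ∃ u, (H.degree u : ℝ) ≤ 2 * B := by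
  have hsum : ∑ u, (H.degree u : ℝ) ≤ ∑ _u : W, 2 * B := by
    rw [sum_const, card_univ, nsmul_eq_mul, ← Nat.cast_sum, H.sum_degrees_eq_twice_card_edges]
    rw [← coe_edgeFinset, Set.ncard_coe_finset] at h
    push_cast
    linarith
  obtain ⟨u, -, hu⟩ := exists_le_of_sum_le univ_nonempty hsum
  exact ⟨u, hu⟩

theorem degree_induce_eq_card_filter [DecidableRel H.Adj] {s : Finset W} (u : (s : Set W))
    [Fintype ((H.induce (s : Set W)).neighborSet u)] :
    (H.induce (s : Set W)).degree u = #{x ∈ s | H.Adj u x} := by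
  rw [← card_neighborSet_eq_degree, ← Fintype.card_coe]
  exact Fintype.card_congr ((Equiv.subtypeSubtypeEquivSubtypeInter (· ∈ s) (H.Adj u)).trans
    (Equiv.subtypeEquivRight fun x => (mem_filter (s := s)).symm))

def IsDegenerateOn [DecidableRel H.Adj] (D : ℕ) (t : Finset W) : Prop :=
  ∀ s ⊆ t, s.Nonempty → ∃ u ∈ s, #{x ∈ s | H.Adj u x} ≤ D

variable {H}

theorem IsDegenerateOn.mono [DecidableRel H.Adj] {D : ℕ} {s t : Finset W}
    (ht : H.IsDegenerateOn D t) (hst : s ⊆ t) : H.IsDegenerateOn D s :=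
  fun r hrs => ht r (hrs.trans hst)

variable (H) in
def nonemptyCliquesIn [DecidableEq W] [DecidableRel H.Adj] (t : Finset W) : Finset (Finset W) :=
  {s ∈ t.powerset | s.Nonempty ∧ H.IsClique (s : Set W)}

variable [DecidableEq W] [DecidableRel H.Adj]

/-- Removing a vertex `u` of degree at most `D`: the cliques through `u` are determined by
their trace on the at most `D` neighbours of `u`. -/
theorem card_nonemptyCliquesIn_le {D : ℕ} {t : Finset W} (ht : H.IsDegenerateOn D t) :
    #(H.nonemptyCliquesIn t) ≤ #t * 2 ^ D := by
  induction t using Finset.strongInduction with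
  | H t ih =>
  rcases t.eq_empty_or_nonempty with rfl | htne
  · simp [nonemptyCliquesIn]
  obtain ⟨u, hu, hdeg⟩ := ht t subset_rfl htne
  have hwith : #{s ∈ H.nonemptyCliquesIn t | u ∈ s} ≤ 2 ^ D := by
    calc #{s ∈ H.nonemptyCliquesIn t | u ∈ s} ≤ #({x ∈ t | H.Adj u x}.powerset) := by
          refine card_le_card_of_injOn (·.erase u) (fun s hs => ?_) (fun s₁ hs₁ s₂ hs₂ h => ?_)
          · simp only [nonemptyCliquesIn, coe_filter, mem_filter, mem_powerset, mem_coe,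
              Set.mem_ofPred_eq] at hs ⊢
            intro x hx
            exact mem_filter.2 ⟨hs.1.1 (mem_of_mem_erase hx),
              hs.1.2.2 hs.2 (mem_of_mem_erase hx) (ne_of_mem_erase hx).symm⟩
          · simp only [coe_filter, Set.mem_ofPred_eq] at hs₁ hs₂
            rw [← insert_erase hs₁.2, ← insert_erase hs₂.2]
            exact congrArg (insert u) h
      _ ≤ 2 ^ D := by
          rw [card_powerset]
          exact Nat.pow_le_pow_right two_pos hdeg
  have hwithout : #{s ∈ H.nonemptyCliquesIn t | u ∉ s} ≤ #(t.erase u) * 2 ^ D := by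
    refine (card_le_card fun s hs => ?_).trans
      (ih _ (erase_ssubset hu) (ht.mono (erase_subset u t)))
    simp only [nonemptyCliquesIn, mem_filter, mem_powerset] at hs ⊢
    exact ⟨fun x hx => mem_erase.2 ⟨fun h => hs.2 (h ▸ hx), hs.1.1 hx⟩, hs.1.2⟩
  rw [← card_filter_add_card_filter_not (u ∈ ·), ← card_erase_add_one hu]
  linarith

theorem numCliques_eq_card_nonemptyCliquesIn [Fintype W] :
    numCliques H = #(H.nonemptyCliquesIn univ) := by
  rw [numCliques, ← Set.ncard_coe_finset]
  congr
  ext s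
  simp [nonemptyCliquesIn]

theorem numCliques_le_of_isDegenerateOn [Fintype W] {D : ℕ}
    (h : ∀ w, H.IsDegenerateOn D (insert w (H.neighborFinset w))) :
    numCliques H ≤ Fintype.card W * (Fintype.card W * 2 ^ D) := by
  have hcover : H.nonemptyCliquesIn univ ⊆
      univ.biUnion fun w => H.nonemptyCliquesIn (insert w (H.neighborFinset w)) := by
    intro s hs
    simp only [nonemptyCliquesIn, mem_filter, mem_powerset, mem_biUnion, mem_univ,
      true_and] at hs ⊢
    obtain ⟨w, hw⟩ := hs.2.1
    refine ⟨w, fun x hx => ?_, hs.2⟩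
    rw [mem_insert, mem_neighborFinset]
    exact (eq_or_ne x w).imp_right fun hxw => hs.2.2 hw hx hxw.symm
  calc numCliques H ≤ ∑ w, #(H.nonemptyCliquesIn (insert w (H.neighborFinset w))) := by
        rw [numCliques_eq_card_nonemptyCliquesIn]
        exact (card_le_card hcover).trans card_biUnion_le
    _ ≤ ∑ _w : W, Fintype.card W * 2 ^ D := by
        gcongr with w
        exact (card_nonemptyCliquesIn_le (h w)).trans
          (Nat.mul_le_mul_right _ (card_le_univ _))
    _ = Fintype.card W * (Fintype.card W * 2 ^ D) := by simp

end SimpleGraph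

open SimpleGraph in
theorem IsShallowMinorAtDepth.isDegenerateOn_closedNbhd {V W : Type*} [Finite V]
    {G : SimpleGraph V} {H : SimpleGraph W} [DecidableEq W] [DecidableRel H.Adj]
    {f : ℕ × ℕ → ℝ} {c : ℕ} (hG : LocalExpansionBoundedBy G f)
    (hH : IsShallowMinorAtDepth G c H) (w : W) [Fintype (H.neighborSet w)] :
    H.IsDegenerateOn ⌊2 * f (3 * c + 1, c)⌋₊ (insert w (H.neighborFinset w)) := by
  classical
  obtain ⟨ψ, hψ⟩ := isShallowMinorAtDepth_iff_exists_model.1 hH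
  obtain ⟨v, hv⟩ := hψ.exists_closedNbhd_subset_closedBall w
  intro s hs hsne
  have hB : ∀ u : (s : Set W), ψ u ⊆ closedBall G v (3 * c + 1) := fun u =>
    hv u <| (mem_insert.1 (hs u.2)).imp_right (H.mem_neighborFinset w u).1
  have hK : IsShallowMinorAtDepth (G.induce (closedBall G v (3 * c + 1))) c
      (H.induce (s : Set W)) :=
    isShallowMinorAtDepth_iff_exists_model.2 ⟨_, (hψ.induce _).restrict hB⟩
  have hE := (ncard_edgeSet_le_grad_mul_card hK).trans
    (mul_le_mul_of_nonneg_right (hG _ _ v) (Nat.cast_nonneg _))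
  have : Nonempty (s : Set W) := hsne.coe_sort
  obtain ⟨u, hu⟩ := exists_degree_le_of_ncard_edgeSet_le _ hE
  refine ⟨u, u.2, Nat.le_floor ?_⟩
  rwa [← degree_induce_eq_card_filter]

/-- For every local-expansion bound `f` and depth `c` there is a constant `M` such
that for every graph `G` with local expansion bounded by `f` and every
`ℓ ≤ |V(G)|`, every shallow minor `H` of `G` at depth `c` with at most `ℓ` vertices
satisfies `#ω(H) ≤ M·ℓ·|V(H)|`; equivalently `clique-grad₀((G∇c)_{≤ℓ}) ≤ M·ℓ`. -/
theorem cliqueGrad_locally_bounded_expansion (f : ℕ × ℕ → ℝ) (c : ℕ) :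
    ∃ M : ℝ, ∀ (V : Type) [Fintype V] (G : SimpleGraph V),
      LocalExpansionBoundedBy G f →
      ∀ ℓ : ℕ, ℓ ≤ Fintype.card V →
        (∀ (n : ℕ) (H : SimpleGraph (Fin n)), n ≤ ℓ →
          IsShallowMinorAtDepth G c H →
          (numCliques H : ℝ) ≤ M * (ℓ : ℝ) * (n : ℝ)) ∧
        cliqueGrad0Minors G c ℓ ≤ M * (ℓ : ℝ) := by
  set D := ⌊2 * f (3 * c + 1, c)⌋₊
  refine ⟨2 ^ D, fun V _ G hG ℓ _ => ?_⟩
  have hbound (n : ℕ) (H : SimpleGraph (Fin n)) (hnℓ : n ≤ ℓ) (hH : IsShallowMinorAtDepth G c H) :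
      (numCliques H : ℝ) ≤ 2 ^ D * ℓ * n := by
    classical
    have hcount := H.numCliques_le_of_isDegenerateOn fun w => hH.isDegenerateOn_closedNbhd hG w
    rw [Fintype.card_fin] at hcount
    calc (numCliques H : ℝ) ≤ n * (n * 2 ^ D) := by exact_mod_cast hcount
      _ = 2 ^ D * n * n := by ring
      _ ≤ 2 ^ D * ℓ * n := by gcongr
  refine ⟨hbound, Real.sSup_le ?_ (by positivity)⟩
  rintro q ⟨n, H, hn, hnℓ, hH, rfl⟩
  rw [div_le_iff₀ (by exact_mod_cast hn)]
  exact hbound n H hnℓ hH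
end
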